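/- arXiv:1604.03871 — 3 statements merged into one kernel-verified Lean document; each statement's English description precedes it below -/
import Mathlib

section
/- Let f ≥ 1 and n be natural numbers with 2f + 2 ≤ n ≤ 6f, and set c = n − 2f. Then there is no function D from finite multisets of real numbers to real numbers satisfying both of the following: (Validity) for every multiset C of c reals taken from [0,1] and every multiset B of 2f reals taken from [0,1], D(C + B) lies in the closed interval [min C, max C]; and (Agreement) for every multiset C of c reals taken from [0,1] with max C − min C > 0 and all multisets B, B′ of 2f reals taken from [0,1], |D(C + B) − D(C + B′)| < max C − min C. (This is the one-round core of the paper's Theorem: no algorithm solves Simple Approximate Agreement in Sasaki et al.'s mobile Byzantine model (M3) when n ≤ 6f.) -/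
open Multiset

/-- The minimum element of a (nonempty, finite) multiset of reals. -/
noncomputable def mmin (V : Multiset ℝ) : ℝ := sInf {x : ℝ | x ∈ V}

/-- The maximum element of a (nonempty, finite) multiset of reals. -/
noncomputable def mmax (V : Multiset ℝ) : ℝ := sSup {x : ℝ | x ∈ V}

/-- The multiset obtained from `N` by deleting its `t` smallest and `t` largest
elements (counted with multiplicity). -/
noncomputable def trim (t : ℕ) (N : Multiset ℝ) : Multiset ℝ :=
  (((N.sort (· ≤ ·)).drop t).take (Multiset.card N - 2 * t) : List ℝ)

/-- The arithmetic mean of a (nonempty) finite multiset of reals. -/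
noncomputable def mean (R : Multiset ℝ) : ℝ := R.sum / (Multiset.card R : ℝ)

lemma mmin_replicate (k : ℕ) (hk : k ≠ 0) (a : ℝ) :
    mmin (Multiset.replicate k a) = a := by
  have : {x : ℝ | x ∈ Multiset.replicate k a} = {a} := by
    ext x; simp [Multiset.mem_replicate, hk]
  rw [mmin, this, csInf_singleton]

lemma mmax_replicate (k : ℕ) (hk : k ≠ 0) (a : ℝ) :
    mmax (Multiset.replicate k a) = a := by
  have : {x : ℝ | x ∈ Multiset.replicate k a} = {a} := by
    ext x; simp [Multiset.mem_replicate, hk]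
  rw [mmax, this, csSup_singleton]

/-- Lower bound for Sasaki et al.'s model (M3): no one-round decision function
exists when `2f + 2 ≤ n ≤ 6f`, with `c = n - 2f` correct values and `2f`
adversarial values per round. -/
theorem no_simple_approx_agreement_M3 (f n : ℕ) (hf : 1 ≤ f)
    (hn₁ : 2 * f + 2 ≤ n) (hn₂ : n ≤ 6 * f) :
    ¬ ∃ D : Multiset ℝ → ℝ,
      (∀ C B : Multiset ℝ,
        Multiset.card C = n - 2 * f → (∀ x ∈ C, x ∈ Set.Icc (0 : ℝ) 1) →
        Multiset.card B = 2 * f → (∀ x ∈ B, x ∈ Set.Icc (0 : ℝ) 1) →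
        D (C + B) ∈ Set.Icc (mmin C) (mmax C)) ∧
      (∀ C B B' : Multiset ℝ,
        Multiset.card C = n - 2 * f → (∀ x ∈ C, x ∈ Set.Icc (0 : ℝ) 1) →
        mmax C - mmin C > 0 →
        Multiset.card B = 2 * f → (∀ x ∈ B, x ∈ Set.Icc (0 : ℝ) 1) →
        Multiset.card B' = 2 * f → (∀ x ∈ B', x ∈ Set.Icc (0 : ℝ) 1) →
        |D (C + B) - D (C + B')| < mmax C - mmin C) := by
  rintro ⟨D, hval, hagr⟩
  set c : ℕ := n - 2 * f with hc
  set z : ℕ := max 1 (c - 2 * f) with hzdef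
  set o : ℕ := c - z with hodef
  have hc2 : 2 ≤ c := by omega
  have hc4 : c ≤ 4 * f := by omega
  have hz1 : 1 ≤ z := by omega
  have hz2 : z ≤ 2 * f := by omega
  have ho1 : 1 ≤ o := by omega
  have ho2 : o ≤ 2 * f := by omega
  have hzo : z + o = c := by omega
  -- the scenario multisets
  set C : Multiset ℝ := Multiset.replicate z 0 + Multiset.replicate o 1 with hC
  set B : Multiset ℝ := Multiset.replicate (2 * f) 0 with hB
  set B' : Multiset ℝ := Multiset.replicate (2 * f) 1 with hB'
  have hmemC : ∀ x ∈ C, x ∈ Set.Icc (0 : ℝ) 1 := by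
    intro x hx
    rcases Multiset.mem_add.1 hx with h | h <;>
      · rw [Multiset.eq_of_mem_replicate h]; norm_num
  have hcardC : Multiset.card C = n - 2 * f := by
    simp [hC]; omega
  -- min and max of C
  have hsetC : {x : ℝ | x ∈ C} = {0, 1} := by
    ext x
    simp only [hC, Multiset.mem_add, Multiset.mem_replicate, Set.mem_setOf_eq,
      Set.mem_insert_iff, Set.mem_singleton_iff]
    constructor
    · rintro (⟨-, h⟩ | ⟨-, h⟩) <;> tauto
    · rintro (h | h)
      · exact Or.inl ⟨by omega, h⟩
      · exact Or.inr ⟨by omega, h⟩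
  have hminC : mmin C = 0 := by
    rw [mmin, hsetC, csInf_pair]; norm_num
  have hmaxC : mmax C = 1 := by
    rw [mmax, hsetC, csSup_pair]; norm_num
  -- First scenario: C + B looks like c correct zeros plus 2f byzantine values
  have hEq1 : C + B =
      Multiset.replicate c (0 : ℝ) +
        (Multiset.replicate o 1 + Multiset.replicate (2 * f - o) 0) := by
    rw [hC, hB]
    have h1 : (Multiset.replicate z (0:ℝ) + Multiset.replicate o 1) +
        Multiset.replicate (2 * f) 0
        = Multiset.replicate (z + 2 * f) (0:ℝ) + Multiset.replicate o 1 := by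
      rw [Multiset.replicate_add]; abel
    have h2 : Multiset.replicate c (0:ℝ) +
        (Multiset.replicate o 1 + Multiset.replicate (2 * f - o) 0)
        = Multiset.replicate (c + (2 * f - o)) (0:ℝ) + Multiset.replicate o 1 := by
      rw [Multiset.replicate_add]; abel
    rw [h1, h2, show z + 2 * f = c + (2 * f - o) by omega]
  have hD1 : D (C + B) = 0 := by
    have h := hval (Multiset.replicate c (0 : ℝ))
      (Multiset.replicate o 1 + Multiset.replicate (2 * f - o) 0)
      (by simp) ?_ (by simp; omega) ?_
    · rw [mmin_replicate c (by omega) 0, mmax_replicate c (by omega) 0] at h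
      rw [hEq1]
      exact le_antisymm h.2 h.1
    · intro x hx
      rw [Multiset.eq_of_mem_replicate hx]; norm_num
    · intro x hx
      rcases Multiset.mem_add.1 hx with h' | h' <;>
        · rw [Multiset.eq_of_mem_replicate h']; norm_num
  -- Second scenario: C + B' looks like c correct ones plus 2f byzantine values
  have hEq2 : C + B' =
      Multiset.replicate c (1 : ℝ) +
        (Multiset.replicate z 0 + Multiset.replicate (2 * f - z) 1) := by
    rw [hC, hB']
    have h1 : (Multiset.replicate z (0:ℝ) + Multiset.replicate o 1) +
        Multiset.replicate (2 * f) 1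
        = Multiset.replicate (o + 2 * f) (1:ℝ) + Multiset.replicate z 0 := by
      rw [Multiset.replicate_add]; abel
    have h2 : Multiset.replicate c (1:ℝ) +
        (Multiset.replicate z 0 + Multiset.replicate (2 * f - z) 1)
        = Multiset.replicate (c + (2 * f - z)) (1:ℝ) + Multiset.replicate z 0 := by
      rw [Multiset.replicate_add]; abel
    rw [h1, h2, show o + 2 * f = c + (2 * f - z) by omega]
  have hD2 : D (C + B') = 1 := by
    have h := hval (Multiset.replicate c (1 : ℝ))
      (Multiset.replicate z 0 + Multiset.replicate (2 * f - z) 1)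
      (by simp) ?_ (by simp; omega) ?_
    · rw [mmin_replicate c (by omega) 1, mmax_replicate c (by omega) 1] at h
      rw [hEq2]
      exact le_antisymm h.2 h.1
    · intro x hx
      rw [Multiset.eq_of_mem_replicate hx]; norm_num
    · intro x hx
      rcases Multiset.mem_add.1 hx with h' | h' <;>
        · rw [Multiset.eq_of_mem_replicate h']; norm_num
  -- Agreement gives the contradiction
  have hag := hagr C B B' hcardC hmemC (by rw [hminC, hmaxC]; norm_num)
    (by simp [hB]) (by intro x hx; rw [Multiset.eq_of_mem_replicate hx]; norm_num)
    (by simp [hB']) (by intro x hx; rw [Multiset.eq_of_mem_replicate hx]; norm_num)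
  rw [hD1, hD2, hminC, hmaxC] at hag
  norm_num at hag
end

section
/- Let f ≥ 1 and n be natural numbers with f + 2 ≤ n ≤ 3f, and set c = n − f. Then there is no function D from finite multisets of real numbers to real numbers satisfying both of the following: (Validity) for every multiset C of c reals taken from [0,1] and every multiset B of f reals taken from [0,1], D(C + B) lies in the closed interval [min C, max C]; and (Agreement) for every multiset C of c reals taken from [0,1] with max C − min C > 0 and all multisets B, B′ of f reals taken from [0,1], |D(C + B) − D(C + B′)| < max C − min C. (This is the one-round core of the paper's Theorem: no algorithm solves Simple Approximate Agreement in Buhrman et al.'s mobile Byzantine model (M4) when n ≤ 3f.) -/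
open Multiset

/-! Split the `c = n - f` correct values as `a` zeros and `b` ones with `1 ≤ a, b ≤ f`, which is
possible exactly when `2 ≤ c ≤ 2f`. Adding `f` Byzantine zeros, a process receives the same
multiset as when all `c` correct values are `0` and the Byzantine processes send `f - b` zeros and
`b` ones, so validity forces it to decide `0`; symmetrically, with `f` Byzantine ones it must decide
`1`. Agreement would then require `|0 - 1| < 1 - 0`. -/

section Replicate

variable {α : Type*} {n a b : ℕ} {x y : α}

lemma forall_mem_replicate {S : Set α} (hx : x ∈ S) : ∀ z ∈ replicate n x, z ∈ S :=
  fun _ hz => eq_of_mem_replicate hz ▸ hx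

lemma mem_replicate_add_replicate {z : α} (hz : z ∈ replicate a x + replicate b y) :
    z = x ∨ z = y :=
  (mem_add.1 hz).imp eq_of_mem_replicate eq_of_mem_replicate

lemma forall_mem_replicate_add_replicate {S : Set α} (hx : x ∈ S) (hy : y ∈ S) :
    ∀ z ∈ replicate a x + replicate b y, z ∈ S := fun z hz => by
  rcases mem_replicate_add_replicate hz with rfl | rfl <;> assumption

lemma replicate_add_replicate_add_replicate_eq {f : ℕ} (hbf : b ≤ f) :
    replicate a x + replicate b y + replicate f x =
      replicate (a + b) x + (replicate (f - b) x + replicate b y) := by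
  obtain ⟨k, rfl⟩ := Nat.exists_eq_add_of_le' hbf
  simp only [Nat.add_sub_cancel, replicate_add]
  abel

end Replicate

lemma mmin_eq_of_mem_of_forall_le {V : Multiset ℝ} {v : ℝ} (hv : v ∈ V)
    (hle : ∀ x ∈ V, v ≤ x) : mmin V = v :=
  IsLeast.csInf_eq ⟨hv, hle⟩

lemma mmax_eq_of_mem_of_forall_le {V : Multiset ℝ} {v : ℝ} (hv : v ∈ V)
    (hle : ∀ x ∈ V, x ≤ v) : mmax V = v :=
  IsGreatest.csSup_eq ⟨hv, hle⟩

section MinMax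

variable {a b : ℕ} {x y : ℝ}

lemma mmin_replicate_s3 (ha : a ≠ 0) (x : ℝ) : mmin (replicate a x) = x :=
  mmin_eq_of_mem_of_forall_le (mem_replicate.2 ⟨ha, rfl⟩) fun _ hz => (eq_of_mem_replicate hz).ge

lemma mmax_replicate_s3 (ha : a ≠ 0) (x : ℝ) : mmax (replicate a x) = x :=
  mmax_eq_of_mem_of_forall_le (mem_replicate.2 ⟨ha, rfl⟩) fun _ hz => (eq_of_mem_replicate hz).le

lemma mmin_replicate_add_replicate (ha : a ≠ 0) (hxy : x ≤ y) :
    mmin (replicate a x + replicate b y) = x := by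
  refine mmin_eq_of_mem_of_forall_le (mem_add.2 (.inl (mem_replicate.2 ⟨ha, rfl⟩))) fun z hz => ?_
  rcases mem_replicate_add_replicate hz with rfl | rfl <;> simp [hxy]

lemma mmax_replicate_add_replicate (hb : b ≠ 0) (hxy : x ≤ y) :
    mmax (replicate a x + replicate b y) = y := by
  refine mmax_eq_of_mem_of_forall_le (mem_add.2 (.inr (mem_replicate.2 ⟨hb, rfl⟩))) fun z hz => ?_
  rcases mem_replicate_add_replicate hz with rfl | rfl <;> simp [hxy]

end MinMax

lemma valid_decision_eq_of_unanimous {c f : ℕ} {D : Multiset ℝ → ℝ}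
    (hV : ∀ C B : Multiset ℝ,
      card C = c → (∀ x ∈ C, x ∈ Set.Icc (0 : ℝ) 1) →
      card B = f → (∀ x ∈ B, x ∈ Set.Icc (0 : ℝ) 1) →
      D (C + B) ∈ Set.Icc (mmin C) (mmax C))
    (hc : c ≠ 0) {v : ℝ} (hv : v ∈ Set.Icc (0 : ℝ) 1) {B : Multiset ℝ}
    (hB : card B = f) (hB01 : ∀ x ∈ B, x ∈ Set.Icc (0 : ℝ) 1) :
    D (replicate c v + B) = v := by
  have h := hV (replicate c v) B (card_replicate c v) (forall_mem_replicate hv) hB hB01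
  rw [mmin_replicate_s3 hc, mmax_replicate_s3 hc] at h
  exact le_antisymm h.2 h.1

theorem no_simple_approx_agreement_M4_general (f n : ℕ)
    (hn₁ : f + 2 ≤ n) (hn₂ : n ≤ 3 * f) :
    ¬ ∃ D : Multiset ℝ → ℝ,
      (∀ C B : Multiset ℝ,
        Multiset.card C = n - f → (∀ x ∈ C, x ∈ Set.Icc (0 : ℝ) 1) →
        Multiset.card B = f → (∀ x ∈ B, x ∈ Set.Icc (0 : ℝ) 1) →
        D (C + B) ∈ Set.Icc (mmin C) (mmax C)) ∧
      (∀ C B B' : Multiset ℝ,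
        Multiset.card C = n - f → (∀ x ∈ C, x ∈ Set.Icc (0 : ℝ) 1) →
        mmax C - mmin C > 0 →
        Multiset.card B = f → (∀ x ∈ B, x ∈ Set.Icc (0 : ℝ) 1) →
        Multiset.card B' = f → (∀ x ∈ B', x ∈ Set.Icc (0 : ℝ) 1) →
        |D (C + B) - D (C + B')| < mmax C - mmin C) := by
  rintro ⟨D, hV, hA⟩
  obtain ⟨a, b, ha, hb, haf, hbf, hab⟩ :
      ∃ a b : ℕ, a ≠ 0 ∧ b ≠ 0 ∧ a ≤ f ∧ b ≤ f ∧ a + b = n - f :=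
    ⟨min f (n - f - 1), n - f - min f (n - f - 1), by omega, by omega, by omega, by omega, by omega⟩
  have h0 : (0 : ℝ) ∈ Set.Icc 0 1 := by simp
  have h1 : (1 : ℝ) ∈ Set.Icc 0 1 := by simp
  have hc : n - f ≠ 0 := by omega
  have decide_zero : D (replicate a 0 + replicate b 1 + replicate f 0) = 0 := by
    rw [replicate_add_replicate_add_replicate_eq hbf, hab]
    exact valid_decision_eq_of_unanimous hV hc h0 (by simp only [card_add, card_replicate]; omega)
      (forall_mem_replicate_add_replicate h0 h1)
  have decide_one : D (replicate a 0 + replicate b 1 + replicate f 1) = 1 := by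
    rw [add_comm (replicate a _), replicate_add_replicate_add_replicate_eq haf, add_comm b, hab]
    exact valid_decision_eq_of_unanimous hV hc h1 (by simp only [card_add, card_replicate]; omega)
      (forall_mem_replicate_add_replicate h1 h0)
  have hmin := mmin_replicate_add_replicate (b := b) ha zero_le_one
  have hmax := mmax_replicate_add_replicate (a := a) hb zero_le_one
  have hagree := hA (replicate a 0 + replicate b 1) (replicate f 0) (replicate f 1)
    (by simp [hab]) (forall_mem_replicate_add_replicate h0 h1) (by rw [hmin, hmax]; norm_num)
    (card_replicate f 0) (forall_mem_replicate h0) (card_replicate f 1) (forall_mem_replicate h1)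
  rw [decide_zero, decide_one, hmin, hmax] at hagree
  norm_num at hagree

/-- Lower bound for Buhrman et al.'s model (M4): no one-round decision function
exists when `f + 2 ≤ n ≤ 3f`, with `c = n - f` correct values and `f`
Byzantine values per round. -/
theorem no_simple_approx_agreement_M4 (f n : ℕ) (hf : 1 ≤ f)
    (hn₁ : f + 2 ≤ n) (hn₂ : n ≤ 3 * f) :
    ¬ ∃ D : Multiset ℝ → ℝ,
      (∀ C B : Multiset ℝ,
        Multiset.card C = n - f → (∀ x ∈ C, x ∈ Set.Icc (0 : ℝ) 1) →
        Multiset.card B = f → (∀ x ∈ B, x ∈ Set.Icc (0 : ℝ) 1) →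
        D (C + B) ∈ Set.Icc (mmin C) (mmax C)) ∧
      (∀ C B B' : Multiset ℝ,
        Multiset.card C = n - f → (∀ x ∈ C, x ∈ Set.Icc (0 : ℝ) 1) →
        mmax C - mmin C > 0 →
        Multiset.card B = f → (∀ x ∈ B, x ∈ Set.Icc (0 : ℝ) 1) →
        Multiset.card B' = f → (∀ x ∈ B', x ∈ Set.Icc (0 : ℝ) 1) →
        |D (C + B) - D (C + B')| < mmax C - mmin C) :=
  no_simple_approx_agreement_M4_general f n hn₁ hn₂
end

section
/- Let f ≥ 1 and c ≥ 2f + 1 be natural numbers, and define D(N) = mean(trim_f(N)) for any finite multiset N of reals with card N ≥ 2f + 1. Then D satisfies both conditions used in the paper's lower-bound abstraction: (Validity) for every multiset C of c reals and every multiset B of at most f reals, D(C + B) lies in the closed interval [min C, max C]; and (Agreement) for every multiset C of c reals with max C − min C > 0 and all multisets B, B′ each of at most f reals, |D(C + B) − D(C + B′)| < max C − min C. (This shows the one-round decision problem from the lower-bound proofs is solvable by the trimmed-mean MSR function as soon as the number of correct values per round satisfies c ≥ 2f + 1, matching the paper's upper bounds for the models where f values per round are adversarial.) -/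
open Multiset

/-! ### Auxiliary lemmas -/

lemma mem_set_finite (V : Multiset ℝ) : {x : ℝ | x ∈ V}.Finite := by
  have : {x : ℝ | x ∈ V} = ↑V.toFinset := by
    ext x; simp
  rw [this]; exact (V.toFinset).finite_toSet

lemma mmin_mem {V : Multiset ℝ} (h : V ≠ 0) : mmin V ∈ V := by
  have hne : {x : ℝ | x ∈ V}.Nonempty := by
    obtain ⟨x, hx⟩ := Multiset.exists_mem_of_ne_zero h
    exact ⟨x, hx⟩
  exact hne.csInf_mem (mem_set_finite V)

lemma mmax_mem {V : Multiset ℝ} (h : V ≠ 0) : mmax V ∈ V := by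
  have hne : {x : ℝ | x ∈ V}.Nonempty := by
    obtain ⟨x, hx⟩ := Multiset.exists_mem_of_ne_zero h
    exact ⟨x, hx⟩
  exact hne.csSup_mem (mem_set_finite V)

lemma mmin_le {V : Multiset ℝ} {x : ℝ} (hx : x ∈ V) : mmin V ≤ x :=
  csInf_le (mem_set_finite V).bddBelow hx

lemma le_mmax {V : Multiset ℝ} {x : ℝ} (hx : x ∈ V) : x ≤ mmax V :=
  le_csSup (mem_set_finite V).bddAbove hx

/-- Decomposition of a multiset into the trimmed part plus `t` smallest and
`t` largest elements. -/
lemma trim_decomp (t : ℕ) (N : Multiset ℝ) (h : 2 * t ≤ Multiset.card N) :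
    ∃ P Q : Multiset ℝ, Multiset.card P = t ∧ Multiset.card Q = t ∧
      N = P + trim t N + Q ∧
      (∀ p ∈ P, ∀ x ∈ trim t N, p ≤ x) ∧
      (∀ x ∈ trim t N, ∀ q ∈ Q, x ≤ q) := by
  set L := N.sort (· ≤ ·) with hLdef
  have hsort : L.Pairwise (· ≤ ·) := Multiset.pairwise_sort _ _
  have hlen : L.length = Multiset.card N := Multiset.length_sort _
  have hNL : (L : Multiset ℝ) = N := Multiset.sort_eq _ _
  set n := Multiset.card N with hn
  refine ⟨(L.take t : List ℝ), ((L.drop t).drop (n - 2 * t) : List ℝ), ?_, ?_, ?_, ?_, ?_⟩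
  · simp only [Multiset.coe_card, List.length_take, hlen]
    omega
  · simp only [Multiset.coe_card, List.length_drop, hlen]
    omega
  · have h1 : L = L.take t ++ (L.drop t).take (n - 2 * t) ++ (L.drop t).drop (n - 2 * t) := by
      rw [List.append_assoc, List.take_append_drop, List.take_append_drop]
    have : trim t N = (((L.drop t).take (n - 2 * t) : List ℝ) : Multiset ℝ) := rfl
    rw [this, ← hNL, Multiset.coe_add, Multiset.coe_add]
    exact congrArg _ h1
  · intro p hp x hx
    have hsplit : L.Pairwise (· ≤ ·) := hsort
    rw [show L = L.take t ++ L.drop t from (List.take_append_drop t L).symm] at hsplit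
    have cross := (List.pairwise_append.mp hsplit).2.2
    have hx' : x ∈ L.drop t := by
      have : x ∈ (L.drop t).take (n - 2 * t) := hx
      exact List.take_subset _ _ this
    exact cross p hp x hx'
  · intro x hx q hq
    have hdropsorted : (L.drop t).Pairwise (· ≤ ·) := hsort.drop
    rw [show L.drop t = (L.drop t).take (n - 2 * t) ++ (L.drop t).drop (n - 2 * t) from
      (List.take_append_drop _ _).symm] at hdropsorted
    exact (List.pairwise_append.mp hdropsorted).2.2 x hx q hq

lemma trim_card (t : ℕ) (N : Multiset ℝ) (h : 2 * t ≤ Multiset.card N) :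
    Multiset.card (trim t N) = Multiset.card N - 2 * t := by
  have hlen : (N.sort (· ≤ ·)).length = Multiset.card N := Multiset.length_sort _
  simp only [trim, Multiset.coe_card, List.length_take, List.length_drop, hlen]
  omega

/-- If at most `t` elements of `N` exceed `b`, every trimmed element is `≤ b`. -/
lemma trim_le (t : ℕ) (N : Multiset ℝ) (h : 2 * t ≤ Multiset.card N) (b : ℝ)
    (hcnt : Multiset.card (N.filter (fun y => b < y)) ≤ t) :
    ∀ x ∈ trim t N, x ≤ b := by
  obtain ⟨P, Q, hP, hQ, hdec, _, hTQ⟩ := trim_decomp t N h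
  intro x hx
  by_contra hbx
  push_neg at hbx
  have hQall : Q.filter (fun y => b < y) = Q :=
    Multiset.filter_eq_self.mpr fun q hq => lt_of_lt_of_le hbx (hTQ x hx q hq)
  have hxfil : x ∈ (trim t N).filter (fun y => b < y) :=
    Multiset.mem_filter.mpr ⟨hx, hbx⟩
  have : t + 1 ≤ Multiset.card (N.filter (fun y => b < y)) := by
    rw [hdec, Multiset.filter_add, Multiset.filter_add, Multiset.card_add, Multiset.card_add,
      hQall, hQ]
    have h1 : 1 ≤ Multiset.card ((trim t N).filter (fun y => b < y)) :=
      Multiset.card_pos.mpr (fun h0 => by simp [h0] at hxfil)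
    omega
  omega

lemma le_trim (t : ℕ) (N : Multiset ℝ) (h : 2 * t ≤ Multiset.card N) (a : ℝ)
    (hcnt : Multiset.card (N.filter (fun y => y < a)) ≤ t) :
    ∀ x ∈ trim t N, a ≤ x := by
  obtain ⟨P, Q, hP, hQ, hdec, hPT, _⟩ := trim_decomp t N h
  intro x hx
  by_contra hbx
  push_neg at hbx
  have hPall : P.filter (fun y => y < a) = P :=
    Multiset.filter_eq_self.mpr fun p hp => lt_of_le_of_lt (hPT p hp x hx) hbx
  have hxfil : x ∈ (trim t N).filter (fun y => y < a) :=
    Multiset.mem_filter.mpr ⟨hx, hbx⟩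
  have : t + 1 ≤ Multiset.card (N.filter (fun y => y < a)) := by
    rw [hdec, Multiset.filter_add, Multiset.filter_add, Multiset.card_add, Multiset.card_add,
      hPall, hP]
    have h1 : 1 ≤ Multiset.card ((trim t N).filter (fun y => y < a)) :=
      Multiset.card_pos.mpr (fun h0 => by simp [h0] at hxfil)
    omega
  omega

/-- If all trimmed elements are `≥ b`, then at most `t` elements of `N` are `< b`. -/
lemma count_lt_le (t : ℕ) (N : Multiset ℝ) (h : 2 * t + 1 ≤ Multiset.card N) (b : ℝ)
    (hall : ∀ x ∈ trim t N, b ≤ x) :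
    Multiset.card (N.filter (fun y => y < b)) ≤ t := by
  obtain ⟨P, Q, hP, hQ, hdec, _, hTQ⟩ := trim_decomp t N (by omega)
  have hTne : trim t N ≠ 0 := by
    have := trim_card t N (by omega)
    intro h0
    rw [h0] at this
    simp at this
    omega
  obtain ⟨x₀, hx₀⟩ := Multiset.exists_mem_of_ne_zero hTne
  have hTfil : (trim t N).filter (fun y => y < b) = 0 :=
    Multiset.filter_eq_nil.mpr fun x hx => not_lt.mpr (hall x hx)
  have hQfil : Q.filter (fun y => y < b) = 0 :=
    Multiset.filter_eq_nil.mpr fun q hq =>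
      not_lt.mpr (le_trans (hall x₀ hx₀) (hTQ x₀ hx₀ q hq))
  rw [hdec, Multiset.filter_add, Multiset.filter_add, Multiset.card_add, Multiset.card_add,
    hTfil, hQfil]
  simp only [Multiset.card_zero, add_zero]
  calc Multiset.card (P.filter fun y => y < b) ≤ Multiset.card P := Multiset.card_le_card
        (Multiset.filter_le _ _)
    _ = t := hP

lemma count_gt_le (t : ℕ) (N : Multiset ℝ) (h : 2 * t + 1 ≤ Multiset.card N) (a : ℝ)
    (hall : ∀ x ∈ trim t N, x ≤ a) :
    Multiset.card (N.filter (fun y => a < y)) ≤ t := by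
  obtain ⟨P, Q, hP, hQ, hdec, hPT, _⟩ := trim_decomp t N (by omega)
  have hTne : trim t N ≠ 0 := by
    have := trim_card t N (by omega)
    intro h0
    rw [h0] at this
    simp at this
    omega
  obtain ⟨x₀, hx₀⟩ := Multiset.exists_mem_of_ne_zero hTne
  have hTfil : (trim t N).filter (fun y => a < y) = 0 :=
    Multiset.filter_eq_nil.mpr fun x hx => not_lt.mpr (hall x hx)
  have hPfil : P.filter (fun y => a < y) = 0 :=
    Multiset.filter_eq_nil.mpr fun p hp =>
      not_lt.mpr (le_trans (hPT p hp x₀ hx₀) (hall x₀ hx₀))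
  rw [hdec, Multiset.filter_add, Multiset.filter_add, Multiset.card_add, Multiset.card_add,
    hTfil, hPfil]
  simp only [Multiset.card_zero, add_zero, zero_add]
  calc Multiset.card (Q.filter fun y => a < y) ≤ Multiset.card Q := Multiset.card_le_card
        (Multiset.filter_le _ _)
    _ = t := hQ

lemma mean_le {R : Multiset ℝ} (h : R ≠ 0) {b : ℝ} (hb : ∀ x ∈ R, x ≤ b) :
    mean R ≤ b := by
  have hcard : (0 : ℝ) < (Multiset.card R : ℝ) := by
    exact_mod_cast Multiset.card_pos.mpr h
  rw [mean, div_le_iff₀ hcard]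
  have := Multiset.sum_le_card_nsmul R b hb
  simpa [nsmul_eq_mul, mul_comm] using this

lemma le_mean {R : Multiset ℝ} (h : R ≠ 0) {a : ℝ} (ha : ∀ x ∈ R, a ≤ x) :
    a ≤ mean R := by
  have hcard : (0 : ℝ) < (Multiset.card R : ℝ) := by
    exact_mod_cast Multiset.card_pos.mpr h
  rw [mean, le_div_iff₀ hcard]
  have := Multiset.card_nsmul_le_sum ha
  simpa [nsmul_eq_mul, mul_comm] using this

lemma all_eq_of_mean_eq_max {R : Multiset ℝ} (h : R ≠ 0) {b : ℝ}
    (hb : ∀ x ∈ R, x ≤ b) (hm : mean R = b) : ∀ x ∈ R, b ≤ x := by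
  intro x hx
  by_contra hxb
  push_neg at hxb
  obtain ⟨S, rfl⟩ := Multiset.exists_cons_of_mem hx
  have hSsum : S.sum ≤ (Multiset.card S : ℝ) * b := by
    have := Multiset.sum_le_card_nsmul S b fun y hy => hb y (Multiset.mem_cons_of_mem hy)
    simpa [nsmul_eq_mul] using this
  have hsum : (x ::ₘ S).sum < (Multiset.card (x ::ₘ S) : ℝ) * b := by
    rw [Multiset.sum_cons, Multiset.card_cons]
    push_cast
    nlinarith
  have hcard : (0 : ℝ) < (Multiset.card (x ::ₘ S) : ℝ) := by
    exact_mod_cast Multiset.card_pos.mpr h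
  rw [mean, div_eq_iff (ne_of_gt hcard)] at hm
  rw [hm] at hsum
  nlinarith

lemma all_eq_of_mean_eq_min {R : Multiset ℝ} (h : R ≠ 0) {a : ℝ}
    (ha : ∀ x ∈ R, a ≤ x) (hm : mean R = a) : ∀ x ∈ R, x ≤ a := by
  intro x hx
  by_contra hxa
  push_neg at hxa
  obtain ⟨S, rfl⟩ := Multiset.exists_cons_of_mem hx
  have hSsum : (Multiset.card S : ℝ) * a ≤ S.sum := by
    have := Multiset.card_nsmul_le_sum (fun y hy => ha y (Multiset.mem_cons_of_mem hy))
    simpa [nsmul_eq_mul] using this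
  have hsum : (Multiset.card (x ::ₘ S) : ℝ) * a < (x ::ₘ S).sum := by
    rw [Multiset.sum_cons, Multiset.card_cons]
    push_cast
    nlinarith
  have hcard : (0 : ℝ) < (Multiset.card (x ::ₘ S) : ℝ) := by
    exact_mod_cast Multiset.card_pos.mpr h
  rw [mean, div_eq_iff (ne_of_gt hcard)] at hm
  rw [hm] at hsum
  nlinarith

/-- Validity core: all trimmed elements of `C + B` lie in `[mmin C, mmax C]`. -/
lemma trim_mem_Icc (f : ℕ) (C B : Multiset ℝ) (hC : C ≠ 0)
    (hcard : 2 * f ≤ Multiset.card (C + B)) (hB : Multiset.card B ≤ f) :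
    ∀ x ∈ trim f (C + B), mmin C ≤ x ∧ x ≤ mmax C := by
  have hhi : Multiset.card ((C + B).filter (fun y => mmax C < y)) ≤ f := by
    rw [Multiset.filter_add]
    have hCf : C.filter (fun y => mmax C < y) = 0 :=
      Multiset.filter_eq_nil.mpr fun x hx => not_lt.mpr (le_mmax hx)
    rw [hCf]
    simp only [Multiset.card_add, Multiset.card_zero, zero_add]
    exact le_trans (Multiset.card_le_card (Multiset.filter_le _ _)) hB
  have hlo : Multiset.card ((C + B).filter (fun y => y < mmin C)) ≤ f := by
    rw [Multiset.filter_add]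
    have hCf : C.filter (fun y => y < mmin C) = 0 :=
      Multiset.filter_eq_nil.mpr fun x hx => not_lt.mpr (mmin_le hx)
    rw [hCf]
    simp only [Multiset.card_add, Multiset.card_zero, zero_add]
    exact le_trans (Multiset.card_le_card (Multiset.filter_le _ _)) hB
  intro x hx
  exact ⟨le_trim f (C + B) hcard (mmin C) hlo x hx,
         trim_le f (C + B) hcard (mmax C) hhi x hx⟩

/-- The trimmed mean of `C + B` is nonzero card and lies in `[mmin C, mmax C]`. -/
lemma validity_core (f c : ℕ) (hc : 2 * f + 1 ≤ c) (C B : Multiset ℝ)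
    (hCc : Multiset.card C = c) (hB : Multiset.card B ≤ f) :
    trim f (C + B) ≠ 0 ∧
    mean (trim f (C + B)) ∈ Set.Icc (mmin C) (mmax C) := by
  have hC0 : C ≠ 0 := by
    intro h0; rw [h0] at hCc; simp at hCc; omega
  have hcard : 2 * f + 1 ≤ Multiset.card (C + B) := by
    rw [Multiset.card_add, hCc]; omega
  have hTne : trim f (C + B) ≠ 0 := by
    have := trim_card f (C + B) (by omega)
    intro h0; rw [h0] at this; simp at this; omega
  have hbound := trim_mem_Icc f C B hC0 (by omega) hB
  exact ⟨hTne, ⟨le_mean hTne (fun x hx => (hbound x hx).1),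
    mean_le hTne (fun x hx => (hbound x hx).2)⟩⟩

/-- If the trimmed mean of `C + B₀` equals `mmax C`, then few elements of `C`
are below `mmax C`. -/
lemma hi_count (f c : ℕ) (hc : 2 * f + 1 ≤ c) (C B₀ : Multiset ℝ)
    (hCc : Multiset.card C = c) (hB₀ : Multiset.card B₀ ≤ f)
    (hm : mean (trim f (C + B₀)) = mmax C) :
    Multiset.card (C.filter (fun y => y < mmax C)) ≤ f := by
  have hC0 : C ≠ 0 := by
    intro h0; rw [h0] at hCc; simp at hCc; omega
  have hcard : 2 * f + 1 ≤ Multiset.card (C + B₀) := by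
    rw [Multiset.card_add, hCc]; omega
  obtain ⟨hTne, _, _⟩ := validity_core f c hc C B₀ hCc hB₀
  have hub : ∀ x ∈ trim f (C + B₀), x ≤ mmax C :=
    fun x hx => (trim_mem_Icc f C B₀ hC0 (by omega) hB₀ x hx).2
  have hall : ∀ x ∈ trim f (C + B₀), mmax C ≤ x :=
    all_eq_of_mean_eq_max hTne hub hm
  have := count_lt_le f (C + B₀) hcard (mmax C) hall
  rw [Multiset.filter_add, Multiset.card_add] at this
  omega

/-- If the trimmed mean of `C + B₀` equals `mmin C`, then few elements of `C`
are above `mmin C`. -/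
lemma lo_count (f c : ℕ) (hc : 2 * f + 1 ≤ c) (C B₀ : Multiset ℝ)
    (hCc : Multiset.card C = c) (hB₀ : Multiset.card B₀ ≤ f)
    (hm : mean (trim f (C + B₀)) = mmin C) :
    Multiset.card (C.filter (fun y => mmin C < y)) ≤ f := by
  have hC0 : C ≠ 0 := by
    intro h0; rw [h0] at hCc; simp at hCc; omega
  have hcard : 2 * f + 1 ≤ Multiset.card (C + B₀) := by
    rw [Multiset.card_add, hCc]; omega
  obtain ⟨hTne, _, _⟩ := validity_core f c hc C B₀ hCc hB₀
  have hlb : ∀ x ∈ trim f (C + B₀), mmin C ≤ x :=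
    fun x hx => (trim_mem_Icc f C B₀ hC0 (by omega) hB₀ x hx).1
  have hall : ∀ x ∈ trim f (C + B₀), x ≤ mmin C :=
    all_eq_of_mean_eq_min hTne hlb hm
  have := count_gt_le f (C + B₀) hcard (mmin C) hall
  rw [Multiset.filter_add, Multiset.card_add] at this
  omega

/-- Both counts small forces `card C ≤ 2f`, a contradiction with `c ≥ 2f+1`. -/
lemma counts_contradiction (f c : ℕ) (hc : 2 * f + 1 ≤ c) (C : Multiset ℝ)
    (hCc : Multiset.card C = c) (hab : mmin C < mmax C)
    (h1 : Multiset.card (C.filter (fun y => y < mmax C)) ≤ f)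
    (h2 : Multiset.card (C.filter (fun y => mmin C < y)) ≤ f) : False := by
  have hsplit : C.filter (fun y => y < mmax C) + C.filter (fun y => ¬ y < mmax C) = C :=
    Multiset.filter_add_not _ _
  have hsub : C.filter (fun y => ¬ y < mmax C) ≤ C.filter (fun y => mmin C < y) := by
    have heq : C.filter (fun y => ¬ y < mmax C)
        = Multiset.filter (fun y => mmin C < y) (C.filter (fun y => ¬ y < mmax C)) := by
      symm
      exact Multiset.filter_eq_self.mpr fun z hz =>
        lt_of_lt_of_le hab (not_lt.mp (Multiset.mem_filter.mp hz).2)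
    rw [heq, Multiset.filter_comm]
    exact Multiset.filter_le _ _
  have := Multiset.card_le_card hsub
  have hcards := congrArg Multiset.card hsplit
  rw [Multiset.card_add] at hcards
  omega

/-- The trimmed-mean MSR function solves the one-round decision problem of the
lower-bound abstraction whenever `c ≥ 2f + 1` correct values are received each
round. -/
theorem trimmed_mean_solves_one_round (f c : ℕ) (hf : 1 ≤ f)
    (hc : 2 * f + 1 ≤ c) :
    (∀ C B : Multiset ℝ,
      Multiset.card C = c → Multiset.card B ≤ f →
      mean (trim f (C + B)) ∈ Set.Icc (mmin C) (mmax C)) ∧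
    (∀ C B B' : Multiset ℝ,
      Multiset.card C = c → mmax C - mmin C > 0 →
      Multiset.card B ≤ f → Multiset.card B' ≤ f →
      |mean (trim f (C + B)) - mean (trim f (C + B'))| < mmax C - mmin C) := by
  constructor
  · intro C B hCc hB
    exact (validity_core f c hc C B hCc hB).2
  · intro C B B' hCc hd hB hB'
    set a := mmin C
    set b := mmax C
    obtain ⟨hTne, hx1, hx2⟩ := validity_core f c hc C B hCc hB
    obtain ⟨hTne', hy1, hy2⟩ := validity_core f c hc C B' hCc hB'
    set x := mean (trim f (C + B)) with hxdef
    set y := mean (trim f (C + B')) with hydef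
    have hab : a < b := by simp only [a, b] at hd ⊢; linarith
    by_contra hge
    push_neg at hge
    have habs : |x - y| = b - a := le_antisymm (abs_le.mpr ⟨by linarith, by linarith⟩) hge
    rcases abs_eq (by linarith : (0:ℝ) ≤ b - a) |>.mp habs with hcase | hcase
    · -- x = b and y = a
      have hx : x = b := by linarith
      have hy : y = a := by linarith
      exact counts_contradiction f c hc C hCc hab
        (hi_count f c hc C B hCc hB hx)
        (lo_count f c hc C B' hCc hB' hy)
    · -- y = b and x = a
      have hy : y = b := by linarith
      have hx : x = a := by linarith
      exact counts_contradiction f c hc C hCc hab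
        (hi_count f c hc C B' hCc hB' hy)
        (lo_count f c hc C B hCc hB hx)
end
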